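/- arXiv:math/9906210 — 2 statements merged into one kernel-verified Lean document; each statement's English description precedes it below -/
import Mathlib

section
/- Let A be an irreducible nonnegative Σ×Σ matrix with Perron eigenvalue r(A) and let σ be the Markov (Parry) measure on the subshift X_A determined by the Perron–Frobenius left and right eigenvectors. Then σ is invariant under the shift σ_A and the measure-theoretic entropy H_σ(σ_A) equals log r(A). -/
/-!
Invariance: the shift-preimage of a cylinder `[w]` is the disjoint union of the cylinders
`[s w]`, and their Parry masses add up to that of `[w]` because `u` is a left eigenvector; as
cylinders form a generating π-system, this determines `μ ∘ shift⁻¹ = μ`.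

Entropy: for a `{0,1}`-matrix a cylinder of `n + 1` symbols has mass `0` or
`u_{i₀} v_{iₙ} / rⁿ`, so `-log μ[w] = n log r + O(1)` on every cylinder of positive mass; hence
the entropy of the partition into such cylinders is `n log r + O(1)`.
-/

open MeasureTheory

/-- The Kolmogorov–Sinai entropy of a shift-invariant measure on `Σ^ℕ`, computed via the
(generating) partitions into cylinder sets of length `n`. -/
noncomputable def shiftKSEntropy {S : Type*} [Fintype S] [MeasurableSpace S]
    (μ : Measure (ℕ → S)) : ℝ :=
  Filter.limsup (fun n : ℕ =>
    (∑ w : Fin n → S, Real.negMulLog (μ {x : ℕ → S | ∀ p : Fin n, x p = w p}).toReal) / n)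
    Filter.atTop

open Filter Topology Set Function

section PrefixCylinder

variable {S : Type*}

def prefixCylinder {n : ℕ} (w : Fin n → S) : Set (ℕ → S) :=
  {x | ∀ p : Fin n, x p = w p}

def shift (x : ℕ → S) : ℕ → S := fun k => x (k + 1)

lemma mem_prefixCylinder_iff {n : ℕ} {w : Fin n → S} {x : ℕ → S} :
    x ∈ prefixCylinder w ↔ (fun p : Fin n => x p) = w :=
  funext_iff.symm

lemma prefixCylinder_eq_of_mem {n : ℕ} {w : Fin n → S} {x : ℕ → S} (hx : x ∈ prefixCylinder w) :
    prefixCylinder w = prefixCylinder (fun p : Fin n => x p) := by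
  rw [mem_prefixCylinder_iff.1 hx]

lemma prefixCylinder_subset_of_le {m n : ℕ} (h : n ≤ m) (x : ℕ → S) :
    prefixCylinder (fun p : Fin m => x p) ⊆ prefixCylinder (fun p : Fin n => x p) :=
  fun _ hy p => hy (Fin.castLE h p)

lemma prefixCylinder_fin_zero (w : Fin 0 → S) : prefixCylinder w = univ :=
  eq_univ_of_forall fun _ p => p.elim0

lemma pairwise_disjoint_prefixCylinder (n : ℕ) :
    Pairwise (Disjoint on (prefixCylinder : (Fin n → S) → Set (ℕ → S))) := by
  intro w w' hne
  refine disjoint_left.2 fun x hx hx' => hne ?_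
  rw [← mem_prefixCylinder_iff.1 hx, ← mem_prefixCylinder_iff.1 hx']

lemma iUnion_prefixCylinder (n : ℕ) : ⋃ w : Fin n → S, prefixCylinder w = univ :=
  eq_univ_of_forall fun x => mem_iUnion.2 ⟨fun p => x p, fun _ => rfl⟩

lemma preimage_shift_prefixCylinder {n : ℕ} (w : Fin n → S) :
    shift ⁻¹' prefixCylinder w = ⋃ s, prefixCylinder (Fin.cons s w : Fin (n + 1) → S) := by
  ext x
  simp only [mem_preimage, mem_iUnion, prefixCylinder, shift, mem_ofPred_eq]
  constructor
  · intro hx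
    exact ⟨x 0, Fin.cases rfl fun p => hx p⟩
  · rintro ⟨s, hx⟩ p
    exact hx p.succ

def prefixCylinders : Set (Set (ℕ → S)) :=
  {C | ∃ (n : ℕ) (w : Fin n → S), C = prefixCylinder w}

lemma isPiSystem_prefixCylinders : IsPiSystem (prefixCylinders (S := S)) := by
  rintro _ ⟨n, w, rfl⟩ _ ⟨m, w', rfl⟩ ⟨x, hx, hx'⟩
  rw [prefixCylinder_eq_of_mem hx, prefixCylinder_eq_of_mem hx']
  rcases le_total n m with h | h
  · rw [inter_eq_right.2 (prefixCylinder_subset_of_le h x)]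
    exact ⟨m, _, rfl⟩
  · rw [inter_eq_left.2 (prefixCylinder_subset_of_le h x)]
    exact ⟨n, _, rfl⟩

variable [MeasurableSpace S]

lemma measurable_shift : Measurable (shift (S := S)) :=
  measurable_pi_lambda _ fun k => measurable_pi_apply (k + 1)

variable [MeasurableSingletonClass S]

lemma measurableSet_prefixCylinder {n : ℕ} (w : Fin n → S) :
    MeasurableSet (prefixCylinder w) := by
  rw [prefixCylinder, ofPred_forall]
  exact .iInter fun p => (measurableSet_singleton (w p)).preimage (measurable_pi_apply (p : ℕ))

lemma generateFrom_prefixCylinders [Countable S] :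
    MeasurableSpace.generateFrom prefixCylinders =
      (MeasurableSpace.pi : MeasurableSpace (ℕ → S)) := by
  refine le_antisymm (MeasurableSpace.generateFrom_le ?_) (iSup_le fun i => ?_)
  · rintro _ ⟨n, w, rfl⟩
    exact measurableSet_prefixCylinder w
  · -- the `i`-th coordinate factors through the prefix of length `i + 1`,
    -- whose fibres are cylinders
    have hprefix : Measurable[MeasurableSpace.generateFrom prefixCylinders]
        (fun (x : ℕ → S) (p : Fin (i + 1)) => x p) := by
      refine @measurable_to_countable' _ _ _ _ (_) _ fun w =>
        MeasurableSpace.measurableSet_generateFrom ⟨i + 1, w, ?_⟩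
      ext x
      exact mem_prefixCylinder_iff.symm
    exact measurable_iff_comap_le.1 ((measurable_pi_apply (Fin.last i)).comp hprefix)

lemma ext_of_measure_prefixCylinder {μ ν : Measure (ℕ → S)} [Countable S] [IsFiniteMeasure μ]
    (h : ∀ (n : ℕ) (w : Fin n → S), μ (prefixCylinder w) = ν (prefixCylinder w)) : μ = ν := by
  refine ext_of_generate_finite _ generateFrom_prefixCylinders.symm isPiSystem_prefixCylinders
    ?_ ?_
  · rintro _ ⟨n, w, rfl⟩
    exact h n w
  · simpa only [prefixCylinder_fin_zero] using h 0 Fin.elim0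

lemma sum_measure_prefixCylinder [Fintype S] (μ : Measure (ℕ → S)) (n : ℕ) :
    ∑ w : Fin n → S, μ (prefixCylinder w) = μ univ := by
  rw [← iUnion_prefixCylinder n, measure_iUnion (pairwise_disjoint_prefixCylinder n)
    measurableSet_prefixCylinder, tsum_fintype]

lemma sum_toReal_measure_prefixCylinder [Fintype S] (μ : Measure (ℕ → S)) [IsProbabilityMeasure μ]
    (n : ℕ) : ∑ w : Fin n → S, (μ (prefixCylinder w)).toReal = 1 := by
  rw [← ENNReal.toReal_sum fun _ _ => measure_ne_top _ _, sum_measure_prefixCylinder,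
    measure_univ, ENNReal.toReal_one]

theorem measurePreserving_shift_of_sum_cons [Fintype S] (μ : Measure (ℕ → S)) [IsFiniteMeasure μ]
    (h : ∀ (n : ℕ) (w : Fin (n + 1) → S),
      ∑ s, μ (prefixCylinder (Fin.cons s w : Fin (n + 2) → S)) = μ (prefixCylinder w)) :
    MeasurePreserving shift μ μ := by
  refine ⟨measurable_shift, ext_of_measure_prefixCylinder fun n w => ?_⟩
  rw [Measure.map_apply measurable_shift (measurableSet_prefixCylinder w)]
  rcases n with _ | n
  · rw [prefixCylinder_fin_zero, preimage_univ]
  · rw [preimage_shift_prefixCylinder, measure_iUnion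
      ((pairwise_disjoint_prefixCylinder _).comp_of_injective (Fin.cons_left_injective w))
      fun _ => measurableSet_prefixCylinder _, tsum_fintype, h]

end PrefixCylinder

lemma tendsto_div_natCast_of_abs_sub_mul_le {a : ℕ → ℝ} {c M : ℝ}
    (h : ∀ n : ℕ, |a (n + 1) - n * c| ≤ M) : Tendsto (fun n : ℕ => a n / n) atTop (𝓝 c) := by
  rw [← tendsto_sub_nhds_zero_iff]
  refine squeeze_zero_norm' ?_ (tendsto_const_div_atTop_nhds_zero_nat (M + |c|))
  filter_upwards [eventually_ge_atTop 1] with n hn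
  obtain ⟨m, rfl⟩ := Nat.exists_eq_add_of_le' hn
  have hm : (0 : ℝ) < m + 1 := by positivity
  calc ‖a (m + 1) / ↑(m + 1) - c‖ = |a (m + 1) - m * c - c| / (m + 1) := by
        rw [Real.norm_eq_abs, ← abs_of_pos hm, ← abs_div]
        congr 1
        push_cast
        field_simp
        ring
    _ ≤ (M + |c|) / ↑(m + 1) := by
        push_cast
        gcongr
        exact (abs_sub _ _).trans (add_le_add (h m) le_rfl)

/-- A Gibbs-type bound `μ[w] ≍ e^{-n h}` on the cylinders of `n + 1` symbols pins the entropy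
to `h`. -/
theorem shiftKSEntropy_eq_of_abs_log_measure_add_le {S : Type*} [Fintype S] [MeasurableSpace S]
    [MeasurableSingletonClass S] (μ : Measure (ℕ → S)) [IsProbabilityMeasure μ] (h M : ℝ)
    (hμ : ∀ (n : ℕ) (w : Fin (n + 1) → S), μ (prefixCylinder w) ≠ 0 →
      |Real.log (μ (prefixCylinder w)).toReal + n * h| ≤ M) :
    shiftKSEntropy μ = h := by
  refine (tendsto_div_natCast_of_abs_sub_mul_le (M := M) fun n => ?_).limsup_eq
  set P : (Fin (n + 1) → S) → ℝ := fun w => (μ (prefixCylinder w)).toReal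
  have hsum : ∑ w, P w = 1 := sum_toReal_measure_prefixCylinder μ (n + 1)
  have hterm : ∀ w, |Real.negMulLog (P w) - P w * (n * h)| ≤ P w * M := by
    intro w
    rcases eq_or_ne (P w) 0 with hw | hw
    · simp [hw]
    · have hsplit : Real.negMulLog (P w) - P w * (n * h) = -(P w * (Real.log (P w) + n * h)) := by
        rw [Real.negMulLog]
        ring
      rw [hsplit, abs_neg, abs_mul, abs_of_nonneg ENNReal.toReal_nonneg]
      exact mul_le_mul_of_nonneg_left (hμ n w (ENNReal.toReal_ne_zero.1 hw).1)
        ENNReal.toReal_nonneg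
  calc |∑ w, Real.negMulLog (P w) - n * h| = |∑ w, (Real.negMulLog (P w) - P w * (n * h))| := by
        rw [Finset.sum_sub_distrib, ← Finset.sum_mul, hsum, one_mul]
    _ ≤ ∑ w, P w * M :=
        (Finset.abs_sum_le_sum_abs _ _).trans (Finset.sum_le_sum fun w _ => hterm w)
    _ = M := by rw [← Finset.sum_mul, hsum, one_mul]

section ParryWeight

variable {S : Type*} (A : Matrix S S ℝ) (r : ℝ) (u v : S → ℝ)

noncomputable def parryWeight {n : ℕ} (w : Fin (n + 1) → S) : ℝ :=
  u (w 0) * v (w (Fin.last n)) * (∏ p : Fin n, A (w p.castSucc) (w p.succ)) / r ^ n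

variable {A r u v}

lemma parryWeight_nonneg (hA : ∀ i j, 0 ≤ A i j) (hr : 0 ≤ r) (hu : ∀ i, 0 ≤ u i)
    (hv : ∀ i, 0 ≤ v i) {n : ℕ} (w : Fin (n + 1) → S) : 0 ≤ parryWeight A r u v w := by
  unfold parryWeight
  have := Finset.prod_nonneg fun p (_ : p ∈ Finset.univ) => hA (w (Fin.castSucc p)) (w p.succ)
  exact div_nonneg (mul_nonneg (mul_nonneg (hu _) (hv _)) this) (pow_nonneg hr n)

lemma parryWeight_eq_of_ne_zero (hA : ∀ i j, A i j = 0 ∨ A i j = 1) {n : ℕ}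
    {w : Fin (n + 1) → S} (hw : parryWeight A r u v w ≠ 0) :
    parryWeight A r u v w = u (w 0) * v (w (Fin.last n)) / r ^ n := by
  have hprod : ∏ p : Fin n, A (w p.castSucc) (w p.succ) ≠ 0 := by
    intro h
    simp [parryWeight, h] at hw
  rw [parryWeight, Finset.prod_eq_one fun p hp =>
    (hA _ _).resolve_left (Finset.prod_ne_zero_iff.1 hprod p hp), mul_one]

variable [Fintype S]

/-- Summing out the first symbol is multiplication of the row vector `u` by `A`. -/
lemma sum_parryWeight_cons (hr : r ≠ 0) (huA : Matrix.vecMul u A = r • u) {n : ℕ}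
    (w : Fin (n + 1) → S) :
    ∑ s, parryWeight A r u v (Fin.cons s w : Fin (n + 2) → S) = parryWeight A r u v w := by
  have hrow : ∑ s, u s * A s (w 0) = r * u (w 0) := by
    simpa [Matrix.vecMul, dotProduct] using congrFun huA (w 0)
  simp only [parryWeight, Fin.prod_univ_succ, Fin.cons_zero, Fin.castSucc_zero, Fin.cons_succ,
    ← Fin.succ_castSucc, ← Fin.succ_last]
  calc ∑ s, u s * v (w (Fin.last n)) * (A s (w 0) * ∏ p : Fin n, A (w p.castSucc) (w p.succ))
        / r ^ (n + 1)
      = (∑ s, u s * A s (w 0)) * (v (w (Fin.last n)) * ∏ p : Fin n, A (w p.castSucc) (w p.succ))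
        / r ^ (n + 1) := by
        rw [Finset.sum_mul, Finset.sum_div]
        congr 1 with s
        ring
    _ = _ := by
        rw [hrow, pow_succ]
        field_simp

lemma abs_log_parryWeight_add_le (hA : ∀ i j, A i j = 0 ∨ A i j = 1) (hr : 0 < r)
    (hu : ∀ i, 0 < u i) (hv : ∀ i, 0 < v i) {n : ℕ} {w : Fin (n + 1) → S}
    (hw : parryWeight A r u v w ≠ 0) :
    |Real.log (parryWeight A r u v w) + n * Real.log r| ≤ ∑ i, ∑ j, |Real.log (u i * v j)| := by
  rw [parryWeight_eq_of_ne_zero hA hw, Real.log_div (mul_pos (hu _) (hv _)).ne'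
    (pow_pos hr n).ne', Real.log_pow, sub_add_cancel]
  calc |Real.log (u (w 0) * v (w (Fin.last n)))| ≤ ∑ j, |Real.log (u (w 0) * v j)| :=
        Finset.single_le_sum (f := fun j => |Real.log (u (w 0) * v j)|)
          (fun _ _ => abs_nonneg _) (Finset.mem_univ _)
    _ ≤ ∑ i, ∑ j, |Real.log (u i * v j)| :=
        Finset.single_le_sum (f := fun i => ∑ j, |Real.log (u i * v j)|)
          (fun _ _ => Finset.sum_nonneg fun _ _ => abs_nonneg _) (Finset.mem_univ _)

end ParryWeight

theorem parry_measure_invariant_and_entropy_general {S : Type*} [Fintype S]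
    [MeasurableSpace S] [MeasurableSingletonClass S]
    (A : Matrix S S ℝ) (hA : ∀ i j, A i j = 0 ∨ A i j = 1)
    (r : ℝ) (hr : 0 < r) (u v : S → ℝ) (hu : ∀ i, 0 < u i) (hv : ∀ i, 0 < v i)
    (huA : Matrix.vecMul u A = r • u)
    (μ : Measure (ℕ → S)) [IsProbabilityMeasure μ]
    (hμ : ∀ (n : ℕ) (w : Fin (n + 1) → S),
      μ {x : ℕ → S | ∀ p : Fin (n + 1), x p = w p}
        = ENNReal.ofReal
            (u (w 0) * v (w (Fin.last n)) * (∏ p : Fin n, A (w p.castSucc) (w p.succ)) / r ^ n)) :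
    MeasurePreserving (fun (x : ℕ → S) (k : ℕ) => x (k + 1)) μ μ ∧
    shiftKSEntropy μ = Real.log r := by
  replace hμ : ∀ (n : ℕ) (w : Fin (n + 1) → S),
      μ (prefixCylinder w) = ENNReal.ofReal (parryWeight A r u v w) := hμ
  have hA₀ : ∀ i j, 0 ≤ A i j := fun i j => (hA i j).elim (·.ge) fun h => h ▸ zero_le_one
  have hweight {n : ℕ} (w : Fin (n + 1) → S) : 0 ≤ parryWeight A r u v w :=
    parryWeight_nonneg hA₀ hr.le (fun i => (hu i).le) (fun i => (hv i).le) w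
  refine ⟨measurePreserving_shift_of_sum_cons μ fun n w => ?_,
    shiftKSEntropy_eq_of_abs_log_measure_add_le μ _ (∑ i, ∑ j, |Real.log (u i * v j)|)
      fun n w hw => ?_⟩
  · simp only [hμ]
    rw [← ENNReal.ofReal_sum_of_nonneg fun s _ => hweight _, sum_parryWeight_cons hr.ne' huA]
  · rw [hμ, ENNReal.toReal_ofReal (hweight w)]
    exact abs_log_parryWeight_add_le hA hr hu hv fun h => hw (by rw [hμ, h, ENNReal.ofReal_zero])

/-- for an irreducible `{0,1}`-matrix `A` with Perron eigenvalue `r` and positive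
left/right eigenvectors `u, v` normalized by `∑ uᵢvᵢ = 1`, the Parry (Markov) measure—assigning
`u_{i₀} v_{i_k} A(i₀,i₁)⋯A(i_{k-1},i_k) / r^k` to cylinders—is shift-invariant and its
measure-theoretic entropy equals `log r`. -/
theorem parry_measure_invariant_and_entropy {S : Type*} [Fintype S] [DecidableEq S] [Nonempty S]
    [MeasurableSpace S] [MeasurableSingletonClass S]
    (A : Matrix S S ℝ) (hA : ∀ i j, A i j = 0 ∨ A i j = 1)
    (hirr : ∀ i j, ∃ k : ℕ, 1 ≤ k ∧ (A ^ k) i j ≠ 0)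
    (r : ℝ) (hr : 0 < r) (u v : S → ℝ) (hu : ∀ i, 0 < u i) (hv : ∀ i, 0 < v i)
    (huA : Matrix.vecMul u A = r • u) (hAv : A.mulVec v = r • v)
    (hnorm : ∑ i, u i * v i = 1)
    (μ : Measure (ℕ → S)) [IsProbabilityMeasure μ]
    (hμ : ∀ (n : ℕ) (w : Fin (n + 1) → S),
      μ {x : ℕ → S | ∀ p : Fin (n + 1), x p = w p}
        = ENNReal.ofReal
            (u (w 0) * v (w (Fin.last n)) * (∏ p : Fin n, A (w p.castSucc) (w p.succ)) / r ^ n)) :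
    MeasurePreserving (fun (x : ℕ → S) (k : ℕ) => x (k + 1)) μ μ ∧
    shiftKSEntropy μ = Real.log r :=
  parry_measure_invariant_and_entropy_general A hA r hr u v hu hv huA μ hμ
end

section
/- Variational principle consequence for subshifts of finite type: for an irreducible {0,1}-matrix A, the measure-theoretic entropy of the shift σ_A with respect to any shift-invariant Borel probability measure σ on X_A is at most log r(A), with equality for the Parry measure. -/
/-!
A measure carried by `X_A` gives mass zero to the cylinders of non-admissible words, and the
admissible words of length `n + 1` number at most `∑ᵢⱼ (Aⁿ)ᵢⱼ ≤ |S| ‖Aⁿ‖`. The entropy of a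
distribution on `N` points is at most `log N`, so the block entropy of length `n + 1` is at
most `log |S| + log ‖Aⁿ‖`, and Gelfand's formula `‖Aⁿ‖^(1/n) → r(A)` gives the upper bound.

For the Parry measure the cylinder of an admissible word `w` has mass `u(w₀) v(wₙ) / rⁿ`, so
the block entropy of length `n + 1` is `n log r` up to an error bounded by `max |log (uᵢ vⱼ)|`.
Finally `r = r(A)`: `r` is an eigenvalue, and pairing `|λ| |x| ≤ A |x|` with the positive left
eigenvector `u` bounds every eigenvalue `λ` by `r`.
-/

open MeasureTheory

open Filter Topology Matrix

theorem Real.sum_negMulLog_le_log_card {ι : Type*} [Fintype ι] {p : ι → ℝ} {T : Finset ι}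
    (hp : ∀ i, 0 ≤ p i) (hsum : ∑ i, p i = 1) (hT : ∀ i ∉ T, p i = 0) :
    ∑ i, negMulLog (p i) ≤ log T.card := by
  have hsumT : ∑ i ∈ T, p i = 1 := by
    rwa [Finset.sum_subset T.subset_univ fun i _ hi => hT i hi]
  have hcard : (0 : ℝ) < T.card := by
    refine Nat.cast_pos.mpr (Finset.card_pos.mpr ?_)
    by_contra h
    simp [Finset.not_nonempty_iff_eq_empty.mp h] at hsumT
  have hjensen := concaveOn_negMulLog.le_map_sum (t := T) (w := fun _ => (T.card : ℝ)⁻¹)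
    (p := p) (fun _ _ => by positivity) (by simp [hcard.ne']) (fun i _ => hp i)
  simp only [smul_eq_mul, ← Finset.mul_sum, hsumT, mul_one] at hjensen
  rw [negMulLog, log_inv, neg_mul_neg] at hjensen
  rw [← Finset.sum_subset T.subset_univ fun i _ hi => by simp [hT i hi]]
  exact le_of_mul_le_mul_left hjensen (inv_pos.mpr hcard)

theorem tendsto_div_of_abs_sub_mul_le {a : ℕ → ℝ} {L C : ℝ}
    (h : ∀ᶠ n in atTop, |a n - n * L| ≤ C) : Tendsto (fun n : ℕ => a n / n) atTop (𝓝 L) := by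
  have herr : Tendsto (fun n : ℕ => (a n - n * L) / n) atTop (𝓝 0) :=
    squeeze_zero_norm' (h.mono fun n hn => by
      rw [norm_div, Real.norm_natCast, Real.norm_eq_abs]
      exact div_le_div_of_nonneg_right hn n.cast_nonneg) (tendsto_const_div_atTop_nhds_zero_nat C)
  rw [← add_zero L]
  refine (herr.const_add L).congr' ((eventually_ne_atTop 0).mono fun n hn => ?_)
  field_simp
  ring

theorem tendsto_const_add_div_succ {f : ℕ → ℝ} {ℓ : ℝ}
    (hf : Tendsto (fun n : ℕ => f n / n) atTop (𝓝 ℓ)) (c : ℝ) :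
    Tendsto (fun n : ℕ => (c + f n) / (n + 1)) atTop (𝓝 ℓ) := by
  have h := (tendsto_one_div_add_atTop_nhds_zero_nat.const_mul c).add
    (hf.mul (tendsto_natCast_div_add_atTop (1 : ℝ)))
  rw [mul_zero, zero_add, mul_one] at h
  refine h.congr' ((eventually_ne_atTop 0).mono fun n hn => ?_)
  field_simp

theorem tendsto_log_norm_pow_div {𝔸 : Type*} [NormedRing 𝔸] [NormedAlgebra ℂ 𝔸] [CompleteSpace 𝔸]
    (a : 𝔸) {c : ℝ} (hc : 0 < c) (h : ∀ n : ℕ, c ≤ ‖a ^ n‖) :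
    Tendsto (fun n : ℕ => Real.log ‖a ^ n‖ / n) atTop
      (𝓝 (Real.log (spectralRadius ℂ a).toReal)) := by
  have hfin : spectralRadius ℂ a ≠ ⊤ :=
    ne_top_of_le_ne_top (by finiteness) (spectrum.spectralRadius_le_pow_nnnorm_pow_one_div ℂ a 0)
  have hroot : Tendsto (fun n : ℕ => ‖a ^ n‖ ^ (1 / n : ℝ)) atTop
      (𝓝 (spectralRadius ℂ a).toReal) :=
    ((ENNReal.tendsto_toReal hfin).comp
      (spectrum.pow_norm_pow_one_div_tendsto_nhds_spectralRadius a)).congr fun n =>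
        ENNReal.toReal_ofReal (by positivity)
  have hc_root : Tendsto (fun n : ℕ => c ^ (1 / n : ℝ)) atTop (𝓝 1) := by
    simpa using tendsto_const_nhds.rpow tendsto_one_div_atTop_nhds_zero_nat (Or.inl hc.ne')
  have hρ : 0 < (spectralRadius ℂ a).toReal := zero_lt_one.trans_le <|
    le_of_tendsto_of_tendsto' hc_root hroot fun n => Real.rpow_le_rpow hc.le (h n) (by positivity)
  refine ((Real.continuousAt_log hρ.ne').tendsto.comp hroot).congr fun n => ?_
  rw [Function.comp_apply, Real.log_rpow (hc.trans_le (h n))]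
  ring

theorem Matrix.mem_spectrum_iff_exists_mulVec_eq_smul {K n : Type*} [Field K] [Fintype n]
    [DecidableEq n] (B : Matrix n n K) (l : K) :
    l ∈ spectrum K B ↔ ∃ x ≠ 0, B *ᵥ x = l • x := by
  rw [← Matrix.spectrum_toLin', ← Module.End.hasEigenvalue_iff_mem_spectrum]
  constructor
  · intro h
    obtain ⟨x, hx⟩ := h.exists_hasEigenvector
    rw [Module.End.hasEigenvector_iff, Module.End.mem_eigenspace_iff, Matrix.toLin'_apply] at hx
    exact ⟨x, hx.2, hx.1⟩
  · rintro ⟨x, hx0, hx⟩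
    refine Module.End.hasEigenvalue_of_hasEigenvector (f := B.toLin') (x := x) ?_
    rw [Module.End.hasEigenvector_iff, Module.End.mem_eigenspace_iff, Matrix.toLin'_apply]
    exact ⟨hx, hx0⟩

section

variable {S : Type*}

section Matrix

variable [Fintype S]

theorem norm_le_of_mulVec_eq_smul_of_vecMul_eq_smul {A : Matrix S S ℝ} (hA : ∀ i j, 0 ≤ A i j)
    {r : ℝ} {u : S → ℝ} (hu : ∀ i, 0 < u i) (hAu : u ᵥ* A = r • u)
    {l : ℂ} {x : S → ℂ} (hx0 : x ≠ 0) (hx : A.map Complex.ofReal *ᵥ x = l • x) : ‖l‖ ≤ r := by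
  set y : S → ℝ := fun j => ‖x j‖
  have hy : ‖l‖ • y ≤ A *ᵥ y := fun j => by
    calc ‖l‖ * ‖x j‖ = ‖∑ k, (A j k : ℂ) * x k‖ := by
          rw [← norm_mul, ← smul_eq_mul, ← Pi.smul_apply, ← hx]; rfl
      _ ≤ ∑ k, A j k * ‖x k‖ := (norm_sum_le _ _).trans_eq <| by
          simp [Complex.norm_real, abs_of_nonneg (hA j _)]
  have huy : 0 < u ⬝ᵥ y := by
    obtain ⟨j, hj⟩ := Function.ne_iff.mp hx0
    exact Finset.sum_pos' (fun j _ => mul_nonneg (hu j).le (norm_nonneg _))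
      ⟨j, Finset.mem_univ j, mul_pos (hu j) (norm_pos_iff.mpr hj)⟩
  refine le_of_mul_le_mul_right ?_ huy
  calc ‖l‖ * (u ⬝ᵥ y) = u ⬝ᵥ (‖l‖ • y) := by rw [dotProduct_smul, smul_eq_mul]
    _ ≤ u ⬝ᵥ (A *ᵥ y) := dotProduct_le_dotProduct_of_nonneg_left hy fun i => (hu i).le
    _ = r * (u ⬝ᵥ y) := by rw [Matrix.dotProduct_mulVec, hAu, smul_dotProduct, smul_eq_mul]

variable [DecidableEq S]

theorem spectralRadius_map_ofReal_eq {A : Matrix S S ℝ} (hA : ∀ i j, 0 ≤ A i j)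
    {r : ℝ} {u v : S → ℝ} (hu : ∀ i, 0 < u i) (hv : v ≠ 0)
    (hAu : u ᵥ* A = r • u) (hAv : A *ᵥ v = r • v) :
    spectralRadius ℂ (A.map Complex.ofReal) = ENNReal.ofReal r := by
  have hle : ∀ l ∈ spectrum ℂ (A.map Complex.ofReal), ‖l‖ ≤ r := fun l hl => by
    obtain ⟨x, hx0, hx⟩ := (Matrix.mem_spectrum_iff_exists_mulVec_eq_smul _ l).mp hl
    exact norm_le_of_mulVec_eq_smul_of_vecMul_eq_smul hA hu hAu hx0 hx
  have hr : (r : ℂ) ∈ spectrum ℂ (A.map Complex.ofReal) := by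
    refine (Matrix.mem_spectrum_iff_exists_mulVec_eq_smul _ _).mpr
      ⟨fun i => (v i : ℂ), fun h => hv (funext fun i => by simpa using congrFun h i), ?_⟩
    have := congrArg (fun w : S → ℝ => fun i => (w i : ℂ)) hAv
    simpa [Matrix.mulVec, dotProduct, funext_iff] using this
  refine le_antisymm (iSup₂_le fun l hl => ?_) ?_
  · rw [← enorm_eq_nnnorm, ← ofReal_norm]
    exact ENNReal.ofReal_le_ofReal (hle l hl)
  · have h0 : 0 ≤ r := (abs_nonneg r).trans (by simpa using hle _ hr)
    refine le_trans (le_of_eq ?_)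
      (le_iSup₂ (f := fun l (_ : l ∈ spectrum ℂ _) => (‖l‖₊ : ENNReal)) _ hr)
    rw [← enorm_eq_nnnorm, ← ofReal_norm, Complex.norm_real, Real.norm_of_nonneg h0]

theorem Matrix.sum_prod_cons_eq_sum_pow_apply {R : Type*} [CommSemiring R] (A : Matrix S S R)
    (n : ℕ) (i : S) :
    ∑ w : Fin n → S, ∏ p : Fin n,
      A ((Fin.cons i w : Fin (n + 1) → S) p.castSucc) ((Fin.cons i w : Fin (n + 1) → S) p.succ)
      = ∑ j, (A ^ n) i j := by
  induction n generalizing i with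
  | zero => simp [Matrix.one_apply]
  | succ n ih =>
    rw [← (Fin.consEquiv fun _ : Fin (n + 1) => S).sum_comp, Fintype.sum_prod_type]
    simp only [Fin.cons_succ] at ih
    simp only [Fin.consEquiv_apply, Fin.prod_univ_succ, Fin.cons_zero, Fin.castSucc_zero,
      Fin.cons_succ, Fin.castSucc_succ, ← Finset.mul_sum, ih, pow_succ', Matrix.mul_apply]
    simp only [Finset.mul_sum]
    exact Finset.sum_comm

theorem Matrix.sum_prod_eq_sum_pow_apply {R : Type*} [CommSemiring R] (A : Matrix S S R) (n : ℕ) :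
    ∑ w : Fin (n + 1) → S, ∏ p : Fin n, A (w p.castSucc) (w p.succ) = ∑ i, ∑ j, (A ^ n) i j := by
  rw [← (Fin.consEquiv fun _ : Fin (n + 1) => S).sum_comp, Fintype.sum_prod_type]
  exact Finset.sum_congr rfl fun i _ => A.sum_prod_cons_eq_sum_pow_apply n i

section LinftyOpNorm

attribute [local instance] Matrix.linftyOpNormedRing Matrix.linftyOpNormedAlgebra

theorem Matrix.linfty_opNorm_map_ofReal (M : Matrix S S ℝ) : ‖M.map Complex.ofReal‖ = ‖M‖ := by
  simp [Matrix.linfty_opNorm_def, Complex.nnnorm_real]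

theorem Matrix.sum_sum_le_card_mul_linfty_opNorm (M : Matrix S S ℝ) :
    ∑ i, ∑ j, M i j ≤ Fintype.card S * ‖M‖ := by
  have hrow : ∀ i, ∑ j, M i j ≤ ‖M‖ := fun i => by
    have := Finset.le_sup (f := fun i => ∑ j, ‖M i j‖₊) (Finset.mem_univ i)
    rw [Matrix.linfty_opNorm_def]
    calc ∑ j, M i j ≤ ∑ j, ‖M i j‖ := Finset.sum_le_sum fun j _ => Real.le_norm_self _
      _ ≤ _ := by simpa [← NNReal.coe_le_coe] using this
  simpa using Finset.sum_le_sum fun i (_ : i ∈ Finset.univ) => hrow i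

end LinftyOpNorm

end Matrix

def wordCylinder {n : ℕ} (w : Fin n → S) : Set (ℕ → S) := {x | ∀ p : Fin n, x p = w p}

def subshift (A : Matrix S S ℝ) : Set (ℕ → S) := {x | ∀ k, A (x k) (x (k + 1)) = 1}

theorem measurableSet_wordCylinder [MeasurableSpace S] [MeasurableSingletonClass S] {n : ℕ}
    (w : Fin n → S) : MeasurableSet (wordCylinder w) := by
  have : wordCylinder w = ⋂ p : Fin n, (fun x : ℕ → S => x p) ⁻¹' {w p} := by
    ext x; simp [wordCylinder]
  rw [this]
  exact .iInter fun p => measurable_pi_apply _ (measurableSet_singleton _)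

variable [Fintype S]

noncomputable def admissibleWords (A : Matrix S S ℝ) (n : ℕ) : Finset (Fin (n + 1) → S) :=
  {w | ∀ p : Fin n, A (w p.castSucc) (w p.succ) = 1}

theorem card_admissibleWords_le [DecidableEq S] {A : Matrix S S ℝ} (hA : ∀ i j, 0 ≤ A i j)
    (n : ℕ) : ((admissibleWords A n).card : ℝ) ≤ ∑ i, ∑ j, (A ^ n) i j := by
  rw [← A.sum_prod_eq_sum_pow_apply n]
  calc ((admissibleWords A n).card : ℝ)
      = ∑ w ∈ admissibleWords A n, ∏ p : Fin n, A (w p.castSucc) (w p.succ) := by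
        rw [Finset.card_eq_sum_ones, Nat.cast_sum, Nat.cast_one]
        refine Finset.sum_congr rfl fun w hw => (Finset.prod_eq_one fun p _ => ?_).symm
        exact (Finset.mem_filter.mp hw).2 p
    _ ≤ _ := Finset.sum_le_sum_of_subset_of_nonneg (Finset.subset_univ _)
        fun w _ _ => Finset.prod_nonneg fun p _ => hA _ _

variable [MeasurableSpace S]

noncomputable def blockEntropy (μ : Measure (ℕ → S)) (n : ℕ) : ℝ :=
  ∑ w : Fin n → S, Real.negMulLog (μ (wordCylinder w)).toReal

theorem shiftKSEntropy_eq_limsup (μ : Measure (ℕ → S)) :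
    shiftKSEntropy μ = limsup (fun n : ℕ => blockEntropy μ n / n) atTop := rfl

theorem blockEntropy_nonneg (μ : Measure (ℕ → S)) [IsProbabilityMeasure μ] (n : ℕ) :
    0 ≤ blockEntropy μ n :=
  Finset.sum_nonneg fun w _ => Real.negMulLog_nonneg ENNReal.toReal_nonneg <| by
    simpa using ENNReal.toReal_mono ENNReal.one_ne_top (prob_le_one (μ := μ))

variable [MeasurableSingletonClass S]

theorem sum_measure_wordCylinder (μ : Measure (ℕ → S)) [IsProbabilityMeasure μ] (n : ℕ) :
    ∑ w : Fin n → S, (μ (wordCylinder w)).toReal = 1 := by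
  have hdisj : Pairwise (Function.onFun Disjoint fun w : Fin n → S => wordCylinder w) :=
    fun w w' hne => Set.disjoint_left.mpr fun x hx hx' =>
      hne (funext fun p => (hx p).symm.trans (hx' p))
  have hcover : ⋃ w : Fin n → S, wordCylinder w = Set.univ :=
    Set.eq_univ_of_forall fun x => Set.mem_iUnion.mpr ⟨fun p => x p, fun _ => rfl⟩
  have := measure_iUnion (μ := μ) hdisj measurableSet_wordCylinder
  rw [hcover, measure_univ, tsum_fintype] at this
  rw [← ENNReal.toReal_sum fun w _ => measure_ne_top μ _, ← this, ENNReal.toReal_one]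

section MeasureOnSubshift

variable {A : Matrix S S ℝ} (μ : Measure (ℕ → S)) [IsProbabilityMeasure μ]

theorem measure_wordCylinder_eq_zero_of_notMem_admissibleWords (hX : μ (subshift A) = 1)
    {n : ℕ} {w : Fin (n + 1) → S} (hw : w ∉ admissibleWords A n) : μ (wordCylinder w) = 0 := by
  have hdisj : Disjoint (wordCylinder w) (subshift A) :=
    Set.disjoint_left.mpr fun x hxw hx => hw <| Finset.mem_filter.mpr ⟨Finset.mem_univ _,
      fun p => by simpa [← hxw p.castSucc, ← hxw p.succ] using hx p⟩
  have hle : μ (wordCylinder w) + μ (subshift A) ≤ 0 + μ (subshift A) := by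
    rw [← measure_union' hdisj (measurableSet_wordCylinder w), hX, zero_add]
    exact prob_le_one
  exact nonpos_iff_eq_zero.mp (ENNReal.le_of_add_le_add_right (by simp [hX]) hle)

theorem blockEntropy_succ_le_log_card_admissibleWords (hX : μ (subshift A) = 1) (n : ℕ) :
    blockEntropy μ (n + 1) ≤ Real.log (admissibleWords A n).card :=
  Real.sum_negMulLog_le_log_card (fun _ => ENNReal.toReal_nonneg) (sum_measure_wordCylinder μ _)
    fun w hw => by rw [measure_wordCylinder_eq_zero_of_notMem_admissibleWords μ hX hw,
      ENNReal.toReal_zero]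

theorem admissibleWords_nonempty (hX : μ (subshift A) = 1) (n : ℕ) :
    (admissibleWords A n).Nonempty := by
  by_contra h
  have hsum := sum_measure_wordCylinder μ (n + 1)
  simp [measure_wordCylinder_eq_zero_of_notMem_admissibleWords μ hX,
    Finset.not_nonempty_iff_eq_empty.mp h] at hsum

attribute [local instance] Matrix.linftyOpNormedRing Matrix.linftyOpNormedAlgebra in
theorem shiftKSEntropy_le_log_spectralRadius [DecidableEq S] (hA : ∀ i j, 0 ≤ A i j)
    (hX : μ (subshift A) = 1) :
    shiftKSEntropy μ ≤ Real.log (spectralRadius ℂ (A.map Complex.ofReal)).toReal := by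
  set B := A.map Complex.ofReal
  have hcount : ∀ n, ((admissibleWords A n).card : ℝ) ≤ Fintype.card S * ‖B ^ n‖ := fun n => by
    rw [show B ^ n = (A ^ n).map Complex.ofReal from (A.map_pow Complex.ofRealHom n).symm,
      Matrix.linfty_opNorm_map_ofReal]
    exact (card_admissibleWords_le hA n).trans (A ^ n).sum_sum_le_card_mul_linfty_opNorm
  have hone : ∀ n, (1 : ℝ) ≤ (admissibleWords A n).card := fun n =>
    Nat.one_le_cast.mpr (admissibleWords_nonempty μ hX n).card_pos
  have hcard : (0 : ℝ) < Fintype.card S := Nat.cast_pos.mpr <|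
    Fintype.card_pos_iff.mpr ⟨(admissibleWords_nonempty μ hX 0).choose 0⟩
  have hlim := tendsto_const_add_div_succ (tendsto_log_norm_pow_div B (inv_pos.mpr hcard)
    fun n => (inv_le_iff_one_le_mul₀' hcard).mpr ((hone n).trans (hcount n)))
    (Real.log (Fintype.card S))
  have hbound : ∀ n : ℕ, blockEntropy μ (n + 1) / ↑(n + 1) ≤
      (Real.log (Fintype.card S) + Real.log ‖B ^ n‖) / (n + 1) := fun n => by
    have hpos : 0 < ‖B ^ n‖ :=
      pos_of_mul_pos_right (zero_lt_one.trans_le ((hone n).trans (hcount n))) hcard.le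
    rw [← Real.log_mul hcard.ne' hpos.ne', Nat.cast_succ]
    gcongr
    exact (blockEntropy_succ_le_log_card_admissibleWords μ hX n).trans
      (Real.log_le_log (zero_lt_one.trans_le (hone n)) (hcount n))
  rw [shiftKSEntropy_eq_limsup, ← limsup_nat_add _ 1]
  exact (limsup_le_limsup (.of_forall hbound) (isCoboundedUnder_le_of_le atTop fun n =>
    div_nonneg (blockEntropy_nonneg μ _) (n + 1).cast_nonneg)
    hlim.isBoundedUnder_le).trans_eq hlim.limsup_eq

end MeasureOnSubshift

/-- The Markov measure with initial law `uᵢ vᵢ` and transition probabilities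
`Aᵢⱼ vⱼ / (r vᵢ)`, described by its cylinder masses. -/
def IsParryMeasure (A : Matrix S S ℝ) (r : ℝ) (u v : S → ℝ) (μ : Measure (ℕ → S)) : Prop :=
  ∀ (n : ℕ) (w : Fin (n + 1) → S), μ (wordCylinder w) = ENNReal.ofReal
    (u (w 0) * v (w (Fin.last n)) * (∏ p : Fin n, A (w p.castSucc) (w p.succ)) / r ^ n)

namespace IsParryMeasure

variable {A : Matrix S S ℝ} {r : ℝ} {u v : S → ℝ} {μ : Measure (ℕ → S)} [IsProbabilityMeasure μ]
  (hμ : IsParryMeasure A r u v μ) (hA : ∀ i j, A i j = 0 ∨ A i j = 1) (hr : 0 < r)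
  (hu : ∀ i, 0 < u i) (hv : ∀ i, 0 < v i)
include hμ hA hr hu hv

theorem abs_blockEntropy_succ_sub_le {C : ℝ} (hC : ∀ i j, |Real.log (u i * v j)| ≤ C) (n : ℕ) :
    |blockEntropy μ (n + 1) - n * Real.log r| ≤ C := by
  set p : (Fin (n + 1) → S) → ℝ := fun w => (μ (wordCylinder w)).toReal
  have hp_nonneg : ∀ w, 0 ≤ p w := fun _ => ENNReal.toReal_nonneg
  have hp_sum : ∑ w, p w = 1 := sum_measure_wordCylinder μ (n + 1)
  have hnegMulLog : ∀ w, Real.negMulLog (p w) =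
      p w * (n * Real.log r) - p w * Real.log (u (w 0) * v (w (Fin.last n))) := fun w => by
    have hpw : p w = u (w 0) * v (w (Fin.last n)) * (∏ q : Fin n, A (w q.castSucc) (w q.succ))
        / r ^ n := by
      have hA_nonneg : ∀ i j, 0 ≤ A i j := fun i j => by rcases hA i j with h | h <;> simp [h]
      simp only [p, hμ n w]
      exact ENNReal.toReal_ofReal <| div_nonneg (mul_nonneg (mul_pos (hu _) (hv _)).le
        (Finset.prod_nonneg fun q _ => hA_nonneg _ _)) (pow_nonneg hr.le n)
    by_cases hadm : ∀ q : Fin n, A (w q.castSucc) (w q.succ) = 1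
    · rw [Finset.prod_eq_one fun q _ => hadm q, mul_one] at hpw
      rw [Real.negMulLog, hpw, Real.log_div (mul_pos (hu _) (hv _)).ne' (pow_ne_zero n hr.ne'),
        Real.log_pow]
      ring
    · obtain ⟨q, hq⟩ := not_forall.mp hadm
      rw [Finset.prod_eq_zero (Finset.mem_univ q) ((hA _ _).resolve_right hq), mul_zero,
        zero_div] at hpw
      simp [hpw]
  rw [blockEntropy, Finset.sum_congr rfl fun w _ => hnegMulLog w, Finset.sum_sub_distrib,
    ← Finset.sum_mul, hp_sum, one_mul, sub_sub_cancel_left, abs_neg]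
  calc |∑ w, p w * Real.log (u (w 0) * v (w (Fin.last n)))|
      ≤ ∑ w, p w * C := (Finset.abs_sum_le_sum_abs _ _).trans <| Finset.sum_le_sum fun w _ => by
        rw [abs_mul, abs_of_nonneg (hp_nonneg w)]
        exact mul_le_mul_of_nonneg_left (hC _ _) (hp_nonneg w)
    _ = C := by rw [← Finset.sum_mul, hp_sum, one_mul]

theorem shiftKSEntropy_eq_log : shiftKSEntropy μ = Real.log r := by
  obtain ⟨C, hC⟩ := Finite.exists_le fun ij : S × S => |Real.log (u ij.1 * v ij.2)|
  refine (tendsto_div_of_abs_sub_mul_le (C := C + |Real.log r|) <|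
    eventually_atTop.mpr ⟨1, fun n hn => ?_⟩).limsup_eq
  obtain ⟨m, rfl⟩ := Nat.exists_eq_add_of_le' hn
  have h := hμ.abs_blockEntropy_succ_sub_le hA hr hu hv (fun i j => hC (i, j)) m
  calc |blockEntropy μ (m + 1) - ↑(m + 1) * Real.log r|
      = |(blockEntropy μ (m + 1) - m * Real.log r) - Real.log r| := by push_cast; ring_nf
    _ ≤ C + |Real.log r| := (abs_sub _ _).trans (by gcongr)

end IsParryMeasure

end

theorem variational_principle_subshift_general {S : Type*} [Fintype S] [DecidableEq S]
    [MeasurableSpace S] [MeasurableSingletonClass S]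
    (A : Matrix S S ℝ) (hA : ∀ i j, A i j = 0 ∨ A i j = 1) :
    (∀ μ : Measure (ℕ → S), IsProbabilityMeasure μ →
      MeasurePreserving (fun (x : ℕ → S) (k : ℕ) => x (k + 1)) μ μ →
      μ {x : ℕ → S | ∀ k, A (x k) (x (k + 1)) = 1} = 1 →
      shiftKSEntropy μ ≤ Real.log ((spectralRadius ℂ (A.map Complex.ofReal)).toReal)) ∧
    (∀ (r : ℝ) (u v : S → ℝ), 0 < r → (∀ i, 0 < u i) → (∀ i, 0 < v i) →
      Matrix.vecMul u A = r • u → A.mulVec v = r • v → (∑ i, u i * v i) = 1 →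
      ∀ μ : Measure (ℕ → S), IsProbabilityMeasure μ →
      (∀ (n : ℕ) (w : Fin (n + 1) → S),
        μ {x : ℕ → S | ∀ p : Fin (n + 1), x p = w p}
          = ENNReal.ofReal
              (u (w 0) * v (w (Fin.last n)) * (∏ p : Fin n, A (w p.castSucc) (w p.succ))
                / r ^ n)) →
      shiftKSEntropy μ = Real.log ((spectralRadius ℂ (A.map Complex.ofReal)).toReal)) := by
  have hA_nonneg : ∀ i j, 0 ≤ A i j := fun i j => by rcases hA i j with h | h <;> simp [h]
  refine ⟨fun μ _ _ hX => shiftKSEntropy_le_log_spectralRadius μ hA_nonneg hX,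
    fun r u v hr hu hv hAu hAv huv μ _ hμ => ?_⟩
  have hv_ne : v ≠ 0 := by
    rintro rfl
    simp at huv
  rw [spectralRadius_map_ofReal_eq hA_nonneg hu hv_ne hAu hAv, ENNReal.toReal_ofReal hr.le]
  exact IsParryMeasure.shiftKSEntropy_eq_log hμ hA hr hu hv

/-- variational principle for subshifts of finite type: for an irreducible
`{0,1}`-matrix `A`, every shift-invariant Borel probability measure on `X_A` has
measure-theoretic entropy at most `log r(A)`, with equality for the Parry measure. -/
theorem variational_principle_subshift {S : Type*} [Fintype S] [DecidableEq S] [Nonempty S]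
    [MeasurableSpace S] [MeasurableSingletonClass S]
    (A : Matrix S S ℝ) (hA : ∀ i j, A i j = 0 ∨ A i j = 1)
    (hirr : ∀ i j, ∃ k : ℕ, 1 ≤ k ∧ (A ^ k) i j ≠ 0) :
    (∀ μ : Measure (ℕ → S), IsProbabilityMeasure μ →
      MeasurePreserving (fun (x : ℕ → S) (k : ℕ) => x (k + 1)) μ μ →
      μ {x : ℕ → S | ∀ k, A (x k) (x (k + 1)) = 1} = 1 →
      shiftKSEntropy μ ≤ Real.log ((spectralRadius ℂ (A.map Complex.ofReal)).toReal)) ∧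
    (∀ (r : ℝ) (u v : S → ℝ), 0 < r → (∀ i, 0 < u i) → (∀ i, 0 < v i) →
      Matrix.vecMul u A = r • u → A.mulVec v = r • v → (∑ i, u i * v i) = 1 →
      ∀ μ : Measure (ℕ → S), IsProbabilityMeasure μ →
      (∀ (n : ℕ) (w : Fin (n + 1) → S),
        μ {x : ℕ → S | ∀ p : Fin (n + 1), x p = w p}
          = ENNReal.ofReal
              (u (w 0) * v (w (Fin.last n)) * (∏ p : Fin n, A (w p.castSucc) (w p.succ))
                / r ^ n)) →
      shiftKSEntropy μ = Real.log ((spectralRadius ℂ (A.map Complex.ofReal)).toReal)) :=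
  variational_principle_subshift_general A hA
end
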